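/- arXiv:1203.6492 — 8 statements merged into one kernel-verified Lean document; each statement's English description precedes it below -/
import Mathlib

section
/- (Curtis–Hedlund theorem) Let G be a group, A a finite set, and B a set. A map τ : A^G → B^G is a cellular automaton if and only if τ is G-equivariant and continuous with respect to the prodiscrete topologies on A^G and B^G. -/
/-- The shift action of `G` on `A^G`: `(g·x)(h) = x(g⁻¹h)`. -/
def shift {G A : Type*} [Group G] (g : G) (x : G → A) : G → A := fun h => x (g⁻¹ * h)

/-- `τ : A^G → B^G` is a cellular automaton. -/
def IsCellularAutomaton {G A B : Type*} [Group G] (τ : (G → A) → G → B) : Prop :=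
  ∃ (M : Finset G) (μ : ({m // m ∈ M} → A) → B),
    ∀ (x : G → A) (g : G), τ x g = μ fun m => x (g * m.1)

/-- Curtis–Hedlund theorem: for `A` finite, `τ : A^G → B^G` is a cellular automaton
iff it is `G`-equivariant and continuous for the prodiscrete topologies. -/
theorem curtis_hedlund {G A B : Type*} [Group G] [Finite A]
    [TopologicalSpace A] [DiscreteTopology A] [TopologicalSpace B] [DiscreteTopology B]
    (τ : (G → A) → G → B) :
    IsCellularAutomaton τ ↔
      ((∀ (g : G) (x : G → A), τ (shift g x) = shift g (τ x)) ∧ Continuous τ) := by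
  classical
  constructor
  · rintro ⟨M, μ, hμ⟩
    refine ⟨fun g x => ?_, ?_⟩
    · funext h
      simp only [hμ, shift]
      congr 1
      funext m
      rw [mul_assoc]
    · have hτ : τ = fun x g => μ (fun m => x (g * m.1)) := by
        funext x g; exact hμ x g
      rw [hτ]
      refine continuous_pi fun g => ?_
      exact Continuous.comp continuous_of_discreteTopology
        (continuous_pi fun m => continuous_apply _)
  · rintro ⟨heq, hcont⟩
    set f : (G → A) → B := fun x => τ x 1 with hf
    have hfc : Continuous f := (continuous_apply 1).comp hcont
    have key : ∀ (x : G → A) (g : G), τ x g = f (shift g⁻¹ x) := by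
      intro x g
      have := congrFun (heq g⁻¹ x) 1
      simp only [shift, inv_inv, mul_one] at this
      simp [hf, this]
    rcases isEmpty_or_nonempty A with hA | hA
    · exact ⟨{1}, fun a => isEmptyElim (a ⟨1, Finset.mem_singleton_self 1⟩),
        fun x g => isEmptyElim (x 1)⟩
    · -- cylinder neighborhoods
      have hopen : ∀ x : G → A, ∃ I : Finset G,
          {y : G → A | ∀ i ∈ I, y i = x i} ⊆ f ⁻¹' {f x} := by
        intro x
        have hU : IsOpen (f ⁻¹' {f x}) := hfc.isOpen_preimage _ (isOpen_discrete _)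
        obtain ⟨I, u, hu, hsub⟩ := isOpen_pi_iff.mp hU x rfl
        refine ⟨I, fun y hy => hsub ?_⟩
        intro i hi
        rw [hy i hi]
        exact (hu i hi).2
      choose I hI using hopen
      set C : (G → A) → Set (G → A) := fun x => {y : G → A | ∀ i ∈ I x, y i = x i} with hC
      have hCopen : ∀ x, IsOpen (C x) := by
        intro x
        have : C x = ⋂ i ∈ I x, (fun y : G → A => y i) ⁻¹' {x i} := by
          ext y; simp [hC]
        rw [this]
        exact isOpen_biInter_finset fun i _ =>
          (continuous_apply i).isOpen_preimage _ (isOpen_discrete _)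
      have hcover : (Set.univ : Set (G → A)) ⊆ ⋃ x, C x := by
        intro x _
        exact Set.mem_iUnion.mpr ⟨x, fun i _ => rfl⟩
      obtain ⟨t, ht⟩ := isCompact_univ.elim_finite_subcover C hCopen hcover
      set M : Finset G := t.biUnion I with hM
      have hMkey : ∀ x y : G → A, (∀ m ∈ M, x m = y m) → f x = f y := by
        intro x y hxy
        obtain ⟨z, hz, hxz⟩ := Set.mem_iUnion₂.mp (ht (Set.mem_univ x))
        have hyz : y ∈ C z := by
          intro i hi
          have hiM : i ∈ M := Finset.mem_biUnion.mpr ⟨z, hz, hi⟩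
          rw [← hxy i hiM]
          exact hxz i hi
        have h1 : f x = f z := hI z hxz
        have h2 : f y = f z := hI z hyz
        rw [h1, h2]
      refine ⟨M, fun a => f (fun h => if hh : h ∈ M then a ⟨h, hh⟩ else Classical.arbitrary A),
        fun x g => ?_⟩
      rw [key x g]
      apply hMkey
      intro m hm
      simp [shift, hm]
end

section
/- (Generalized Curtis–Hedlund theorem) Let G be a group and A, B arbitrary sets. A map τ : A^G → B^G is a cellular automaton if and only if τ is G-equivariant and uniformly continuous with respect to the prodiscrete uniform structures on A^G and B^G. -/
open Filter Set Uniformity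

/-- Generalized Curtis–Hedlund theorem: for arbitrary alphabets `A`, `B`, a map
`τ : A^G → B^G` is a cellular automaton iff it is `G`-equivariant and uniformly
continuous for the prodiscrete uniformities (products of discrete uniformities). -/
theorem generalized_curtis_hedlund {G A B : Type*} [Group G]
    (τ : (G → A) → G → B) :
    IsCellularAutomaton τ ↔
      ((∀ (g : G) (x : G → A), τ (shift g x) = shift g (τ x)) ∧
        @UniformContinuous (G → A) (G → B)
          (Pi.uniformSpace (fun _ => A) (U := fun _ => ⊥))
          (Pi.uniformSpace (fun _ => B) (U := fun _ => ⊥)) τ) := by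
  classical
  letI : UniformSpace A := ⊥
  letI : UniformSpace B := ⊥
  have hUA : 𝓤 (G → A) = ⨅ i : G, 𝓟 {p : (G → A) × (G → A) | p.1 i = p.2 i} := by
    rw [Pi.uniformity]
    congr 1
    funext i
    rw [bot_uniformity, comap_principal]
    rfl
  have hUB : 𝓤 (G → B) = ⨅ i : G, 𝓟 {p : (G → B) × (G → B) | p.1 i = p.2 i} := by
    rw [Pi.uniformity]
    congr 1
    funext i
    rw [bot_uniformity, comap_principal]
    rfl
  have hSA : ∀ i : G, {p : (G → A) × (G → A) | p.1 i = p.2 i} ∈ 𝓤 (G → A) := by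
    intro i
    rw [hUA]
    exact mem_iInf_of_mem i (mem_principal_self _)
  have hSB : ∀ i : G, {p : (G → B) × (G → B) | p.1 i = p.2 i} ∈ 𝓤 (G → B) := by
    intro i
    rw [hUB]
    exact mem_iInf_of_mem i (mem_principal_self _)
  constructor
  · rintro ⟨M, μ, hμ⟩
    constructor
    · intro g x
      funext h
      simp only [shift, hμ, mul_assoc]
    · show UniformContinuous τ
      rw [uniformContinuous_def]
      intro r hr
      rw [hUB, Filter.mem_iInf] at hr
      obtain ⟨I, Ifin, V, hV, rfl⟩ := hr
      haveI := Ifin.fintype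
      have hre : {x : (G → A) × (G → A) | (τ x.1, τ x.2) ∈ ⋂ i, V i} =
          ⋂ i, {x : (G → A) × (G → A) | (τ x.1, τ x.2) ∈ V i} := by
        ext p; simp
      rw [hre]
      refine iInter_mem.2 fun i => ?_
      have hVi := hV i
      rw [mem_principal] at hVi
      refine mem_of_superset
        (iInter_mem.2 fun m : {m // m ∈ M} => hSA ((i : G) * m.1)) fun p hp => hVi ?_
      show τ p.1 (i : G) = τ p.2 (i : G)
      rw [hμ, hμ]
      congr 1
      funext m
      exact mem_iInter.1 hp m
  · rintro ⟨heq, hUC⟩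
    have hUC' : UniformContinuous τ := hUC
    have hT : {p : (G → A) × (G → A) | τ p.1 1 = τ p.2 1} ∈ 𝓤 (G → A) := by
      have := hUC' (hSB 1)
      rwa [Filter.mem_map] at this
    rw [hUA, Filter.mem_iInf] at hT
    obtain ⟨I, Ifin, V, hV, hTeq⟩ := hT
    set M : Finset G := Ifin.toFinset with hM
    have key : ∀ x y : G → A, (∀ i ∈ M, x i = y i) → τ x 1 = τ y 1 := by
      intro x y h
      have : (x, y) ∈ ⋂ i, V i := by
        refine mem_iInter.2 fun i => ?_
        have := hV i
        rw [mem_principal] at this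
        exact this (h i.1 (by simp [hM, i.2]))
      rw [← hTeq] at this
      exact this
    by_cases hA : Nonempty A
    · obtain ⟨a0⟩ := hA
      refine ⟨M, fun u => τ (fun h => if hm : h ∈ M then u ⟨h, hm⟩ else a0) 1, ?_⟩
      intro x g
      have e1 : τ x g = τ (shift g⁻¹ x) 1 := by
        rw [heq g⁻¹ x]
        simp [shift]
      rw [e1]
      refine key _ _ fun i hi => ?_
      simp [shift, hi]
    · refine ⟨{1}, fun u => absurd ⟨u ⟨1, by simp⟩⟩ hA, fun x g => absurd ⟨x 1⟩ hA⟩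
end

section
/- If A is a finite set and τ : A^G → B^G is a bijective cellular automaton, then the inverse map τ⁻¹ : B^G → A^G is also a cellular automaton (i.e., τ is reversible). -/
/-- If `A` is finite, every bijective cellular automaton `τ : A^G → B^G` is
reversible: its inverse map is again a cellular automaton. -/
theorem bijective_cellular_automaton_reversible {G A B : Type*} [Group G] [Finite A]
    (τ : (G → A) → G → B) (hτ : IsCellularAutomaton τ)
    (σ : (G → B) → G → A)
    (hleft : Function.LeftInverse σ τ) (hright : Function.RightInverse σ τ) :
    IsCellularAutomaton σ := by
  classical
  obtain ⟨M, μ, hμ⟩ := hτ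
  rcases isEmpty_or_nonempty B with hB | hB
  · refine ⟨{1}, fun f => (hB.false (f ⟨1, Finset.mem_singleton_self 1⟩)).elim, ?_⟩
    intro x g
    exact (hB.false (x 1)).elim
  · -- B is finite, since τ is surjective and values are in the range of μ
    have hBfin : Finite B := by
      apply Finite.of_surjective (fun z : ({m // m ∈ M} → A) => μ z)
      intro b
      refine ⟨fun m => σ (fun _ => b) m.1, ?_⟩
      have h1 : τ (σ fun _ => b) 1 = b := by rw [hright (fun _ => b)]
      rw [hμ] at h1
      simpa using h1
    -- discrete topologies
    letI : TopologicalSpace A := ⊥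
    letI : TopologicalSpace B := ⊥
    haveI : DiscreteTopology A := ⟨rfl⟩
    haveI : DiscreteTopology B := ⟨rfl⟩
    have hτc : Continuous τ := by
      apply continuous_pi
      intro g
      have heq : (fun x => τ x g) = (fun x : G → A => μ fun m => x (g * m.1)) := by
        funext x; exact hμ x g
      rw [heq]
      exact Continuous.comp continuous_of_discreteTopology
        (continuous_pi fun m => continuous_apply _)
    have hσc : Continuous σ :=
      (Continuous.homeoOfEquivCompactToT2
        (f := ⟨τ, σ, hleft, hright⟩) hτc).symm.continuous
    -- key: σ · 1 depends only on finitely many coordinates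
    have key : ∃ N : Finset G, ∀ x y : G → B, (∀ n ∈ N, x n = y n) → σ x 1 = σ y 1 := by
      have hf : Continuous (fun x : G → B => σ x 1) := (continuous_apply 1).comp hσc
      have hx : ∀ x : G → B, ∃ I : Finset G, ∀ y, (∀ g ∈ I, y g = x g) → σ y 1 = σ x 1 := by
        intro x
        have hop : IsOpen {y : G → B | σ y 1 = σ x 1} :=
          hf.isOpen_preimage {σ x 1} (isOpen_discrete _)
        rw [isOpen_pi_iff] at hop
        obtain ⟨I, u, h1, h2⟩ := hop x rfl
        refine ⟨I, fun y hy => h2 fun g hg => ?_⟩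
        rw [hy g hg]
        exact (h1 g hg).2
      choose I hI using hx
      have hVopen : ∀ x : G → B, IsOpen {y : G → B | ∀ g ∈ I x, y g = x g} := by
        intro x
        have : {y : G → B | ∀ g ∈ I x, y g = x g} = Set.pi (I x : Set G) (fun g => {x g}) := by
          ext y; simp [Set.mem_pi]
        rw [this]
        exact isOpen_set_pi (I x).finite_toSet (fun g _ => isOpen_discrete _)
      have hcov : (Set.univ : Set (G → B)) ⊆ ⋃ x : G → B, {y | ∀ g ∈ I x, y g = x g} :=
        fun x _ => Set.mem_iUnion.2 ⟨x, fun g _ => rfl⟩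
      obtain ⟨t, ht⟩ := isCompact_univ.elim_finite_subcover _ hVopen hcov
      refine ⟨t.biUnion I, ?_⟩
      intro x y hxy
      have hx' := ht (Set.mem_univ x)
      simp only [Set.mem_iUnion] at hx'
      obtain ⟨z, hz, hxz⟩ := hx'
      have hxz' : ∀ g ∈ I z, x g = z g := hxz
      have hyz : ∀ g ∈ I z, y g = z g := fun g hg => by
        rw [← hxy g (Finset.mem_biUnion.2 ⟨z, hz, hg⟩)]; exact hxz' g hg
      rw [hI z x hxz', hI z y hyz]
    -- equivariance of σ
    have hequiv : ∀ (g : G) (y : G → B), σ y g = σ (fun k => y (g * k)) 1 := by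
      intro g y
      have hτeq : ∀ (x : G → A) (h : G), τ (fun k => x (g * k)) h = τ x (g * h) := by
        intro x h
        rw [hμ, hμ]
        congr 1; funext m; rw [mul_assoc]
      have h2 : τ (σ fun k => y (g * k)) = τ (fun k => σ y (g * k)) := by
        rw [hright]
        funext h
        rw [hτeq (σ y) h, hright]
      have h3 := hleft.injective h2
      calc σ y g = σ y (g * 1) := by rw [mul_one]
        _ = σ (fun k => y (g * k)) 1 := by rw [h3]
    obtain ⟨N, hN⟩ := key
    inhabit B
    refine ⟨N, fun z => σ (fun g' => if h : g' ∈ N then z ⟨g', h⟩ else default) 1, ?_⟩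
    intro x g
    rw [hequiv g x]
    apply hN
    intro n hn
    simp [hn]
end

section
/- Let (X_n, f_{nm}) be a projective sequence of sets such that (1) there exists n₀ with ⋂_{k ≥ n₀} f_{n₀k}(X_k) ≠ ∅, and (2) for all m ≥ n and every x ∈ ⋂_{i ≥ n} f_{ni}(X_i), one has ⋂_{j ≥ m} (f_{nm}⁻¹(x) ∩ f_{mj}(X_j)) ≠ ∅. Then lim← X_n ≠ ∅. -/
/-- If a projective sequence of sets satisfies (IP-1): some set of universal elements
`⋂_{k ≥ n₀} f_{n₀k}(X k)` is nonempty, and (IP-2): for all `m ≥ n` and every universal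
element `x` of `X n`, the intersection `⋂_{j ≥ m} (f_{nm}⁻¹(x) ∩ f_{mj}(X j))` is
nonempty, then the projective limit is nonempty. -/
theorem projective_limit_nonempty_of_IP {X : ℕ → Type*}
    (f : ∀ n m, n ≤ m → X m → X n)
    (hid : ∀ n (x : X n), f n n le_rfl x = x)
    (hcomp : ∀ n m k (hnm : n ≤ m) (hmk : m ≤ k) (x : X k),
      f n k (hnm.trans hmk) x = f n m hnm (f m k hmk x))
    (h1 : ∃ n₀, (⋂ k, ⋂ (h : n₀ ≤ k), Set.range (f n₀ k h)).Nonempty)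
    (h2 : ∀ n m (hnm : n ≤ m),
      ∀ x ∈ ⋂ i, ⋂ (h : n ≤ i), Set.range (f n i h),
        (⋂ j, ⋂ (hmj : m ≤ j),
          (f n m hnm ⁻¹' {x} ∩ Set.range (f m j hmj))).Nonempty) :
    Nonempty {x : ∀ n, X n // ∀ n m (h : n ≤ m), x n = f n m h (x m)} := by
  classical
  obtain ⟨n₀, x₀, hx₀⟩ := h1
  set U : ∀ n, Set (X n) := fun n => ⋂ i, ⋂ (h : n ≤ i), Set.range (f n i h) with hU
  have step : ∀ n (y : X n), y ∈ U n →
      ∃ z : X (n + 1), f n (n + 1) (Nat.le_succ n) z = y ∧ z ∈ U (n + 1) := by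
    intro n y hy
    obtain ⟨z, hz⟩ := h2 n (n + 1) (Nat.le_succ n) y hy
    simp only [Set.mem_iInter, Set.mem_inter_iff, Set.mem_preimage,
      Set.mem_singleton_iff] at hz
    refine ⟨z, (hz (n + 1) le_rfl).1, ?_⟩
    simp only [hU, Set.mem_iInter]
    intro j hj
    exact (hz j hj).2
  choose g hg1 hg2 using step
  let w : ∀ k : ℕ, {y : X (n₀ + k) // y ∈ U (n₀ + k)} := fun k =>
    Nat.rec ⟨x₀, hx₀⟩ (fun k p => ⟨g (n₀ + k) p.1 p.2, hg2 (n₀ + k) p.1 p.2⟩) k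
  have hw : ∀ k, (w k).1 = f (n₀ + k) (n₀ + (k + 1)) (Nat.le_succ _) ((w (k + 1)).1) :=
    fun k => (hg1 (n₀ + k) (w k).1 (w k).2).symm
  have vcomp : ∀ k l (h : k ≤ l),
      (w k).1 = f (n₀ + k) (n₀ + l) (by omega) ((w l).1) := by
    intro k l h
    induction l, h using Nat.le_induction with
    | base => rw [hid]
    | succ l hl ih =>
      rw [ih, hw l]
      rw [← hcomp (n₀ + k) (n₀ + l) (n₀ + (l + 1)) (by omega) (Nat.le_succ _)]
  refine ⟨⟨fun n => f n (n₀ + n) (Nat.le_add_left n n₀) ((w n).1), ?_⟩⟩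
  intro n m h
  show f n (n₀ + n) (Nat.le_add_left n n₀) ((w n).1) = f n m h (f m (n₀ + m) (Nat.le_add_left m n₀) ((w m).1))
  rw [vcomp n m h, ← hcomp n (n₀ + n) (n₀ + m) (Nat.le_add_left n n₀) (by omega),
    ← hcomp n m (n₀ + m) h (Nat.le_add_left m n₀)]
end

section
/- Let G be a group and R a ring. Let M be a left R-module all of whose translates of submodules satisfy the descending chain condition (e.g., M Artinian). Then for every R-linear cellular automaton τ : M^G → M^G, the image τ(M^G) is closed in M^G for the prodiscrete topology. -/
open scoped Pointwise

section Aux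

variable {R P : Type*} [Ring R] [AddCommGroup P] [Module R P]

private lemma sub_mem_of_coset {v : P} {N : Submodule R P} {a b : P}
    (ha : a ∈ v +ᵥ (N : Set P)) (hb : b ∈ v +ᵥ (N : Set P)) : a - b ∈ N := by
  obtain ⟨a', ha', rfl⟩ := Set.mem_vadd_set.mp ha
  obtain ⟨b', hb', rfl⟩ := Set.mem_vadd_set.mp hb
  simpa [vadd_eq_add, add_sub_add_left_eq_sub] using sub_mem ha' hb'

private lemma mem_coset_of_sub {v : P} {N : Submodule R P} {a : P}
    (h : a - v ∈ N) : a ∈ v +ᵥ (N : Set P) :=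
  Set.mem_vadd_set.mpr ⟨a - v, h, by simp [vadd_eq_add]⟩

/-- In an Artinian module, a non-increasing sequence of cosets of submodules stabilizes. -/
private lemma coset_dcc [IsArtinian R P] (c : ℕ → Set P)
    (h : ∀ n, ∃ (v : P) (N : Submodule R P), c n = v +ᵥ (N : Set P))
    (hc : ∀ n, c (n + 1) ⊆ c n) : ∃ n₀, ∀ n, n₀ ≤ n → c n = c n₀ := by
  choose v N hvN using h
  have hmem : ∀ n, v n ∈ c n := fun n => by
    rw [hvN n]; exact mem_coset_of_sub (by simp)
  have hsub : ∀ n (a b : P), a ∈ c n → b ∈ c n → a - b ∈ N n := fun n a b ha hb =>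
    sub_mem_of_coset (hvN n ▸ ha) (hvN n ▸ hb)
  have hanti : Antitone c := antitone_nat_of_succ_le hc
  have hN : ∀ a b, a ≤ b → N b ≤ N a := by
    intro a b hab x hx
    have h1 : v b + x ∈ c a := hanti hab (by
      rw [hvN b]; exact mem_coset_of_sub (by simpa using hx))
    have h2 : v b ∈ c a := hanti hab (hmem b)
    simpa using hsub a _ _ h1 h2
  obtain ⟨n₀, hn₀⟩ := IsArtinian.monotone_stabilizes (R := R) (M := P)
    ⟨fun n => OrderDual.toDual (N n), fun a b hab => hN a b hab⟩
  have hNeq : ∀ n, n₀ ≤ n → N n = N n₀ := fun n hn =>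
    OrderDual.toDual.injective ((hn₀ n hn).symm)
  refine ⟨n₀, fun n hn => Set.Subset.antisymm (hanti hn) ?_⟩
  intro a ha
  have h2 : v n ∈ c n₀ := hanti hn (hmem n)
  have h3 : a - v n ∈ N n := by rw [hNeq n hn]; exact hsub n₀ a (v n) ha h2
  rw [hvN n]; exact mem_coset_of_sub h3

private lemma artinian_of_hdcc {R M : Type*} [Ring R] [AddCommGroup M] [Module R M]
    (hdcc : ∀ c : ℕ → Set M,
      (∀ n, ∃ (v : M) (N : Submodule R M), c n = v +ᵥ (N : Set M)) →
      (∀ n, c (n + 1) ⊆ c n) → ∃ n₀, ∀ n, n₀ ≤ n → c n = c n₀) :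
    IsArtinian R M := by
  rw [← monotone_stabilizes_iff_artinian]
  intro f
  obtain ⟨n₀, hn₀⟩ := hdcc (fun n => ((OrderDual.ofDual (f n) : Submodule R M) : Set M))
    (fun n => ⟨0, OrderDual.ofDual (f n), by simp⟩)
    (fun n => by
      have : f n ≤ f (n + 1) := f.monotone (Nat.le_succ n)
      exact this)
  refine ⟨n₀, fun m hm => ?_⟩
  have := hn₀ m hm
  exact (OrderDual.ofDual.injective (SetLike.coe_injective this)).symm

private lemma countable_subgroup_closure {G : Type*} [Group G] (S : Finset G) :
    Countable (Subgroup.closure (S : Set G)) := by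
  have h1 : Countable (FreeGroup {x // x ∈ (S : Set G)}) :=
    (Quot.mk_surjective).countable
  have h2 := MonoidHom.rangeRestrict_surjective
    (FreeGroup.lift (Subtype.val : {x // x ∈ (S : Set G)} → G))
  have h3 : Countable (FreeGroup.lift (Subtype.val : {x // x ∈ (S : Set G)} → G)).range :=
    h2.countable
  rwa [FreeGroup.range_lift_eq_closure, Subtype.range_coe] at h3

/-- The heart of the argument: on a single left coset `g₀ • closure S` of the subgroup
generated by the memory set, a configuration `y` that is approximable on finite sets
is exactly attained. -/
private lemma coset_solution {G R M : Type*} [Group G] [Ring R] [AddCommGroup M] [Module R M]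
    [IsArtinian R M] (S : Finset G) (μ : ({s // s ∈ S} → M) →ₗ[R] M) (y : G → M)
    (key : ∀ F : Finset G, ∃ x : G → M, ∀ g ∈ F, μ (fun s => x (g * s.1)) = y g)
    (g₀ : G) :
    ∃ x : G → M, ∀ h : G, h ∈ Subgroup.closure (S : Set G) →
      μ (fun s => x (g₀ * h * s.1)) = y (g₀ * h) := by
  classical
  set H : Subgroup G := Subgroup.closure (S : Set G) with hHdef
  haveI : Countable H := countable_subgroup_closure S
  obtain ⟨e, he⟩ := exists_surjective_nat H
  -- the increasing exhaustion of the coset and the corresponding windows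
  set F : ℕ → Finset G := fun n => (Finset.range (n + 1)).image (fun k => g₀ * (e k : G))
    with hFdef
  set W : ℕ → Finset G := fun n => F n * S with hWdef
  have hFmono : ∀ {a b : ℕ}, a ≤ b → F a ⊆ F b := fun {a b} hab =>
    Finset.image_subset_image (Finset.range_subset_range.mpr (by omega))
  have hWmono : ∀ {a b : ℕ}, a ≤ b → W a ⊆ W b := fun {a b} hab =>
    Finset.mul_subset_mul_right (hFmono hab)
  -- the per-site linear maps
  let shift : G → ((G → M) →ₗ[R] ({s // s ∈ S} → M)) := fun g =>
    { toFun := fun x s => x (g * s.1), map_add' := fun _ _ => rfl, map_smul' := fun _ _ => rfl }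
  let T : G → ((G → M) →ₗ[R] M) := fun g => μ.comp (shift g)
  have hT : ∀ g x, T g x = μ (fun s => x (g * s.1)) := fun _ _ => rfl
  -- affine sets of partial solutions, and their projections to finite windows
  set A : ℕ → Set (G → M) := fun n => {x | ∀ g ∈ F n, T g x = y g} with hAdef
  have hAne : ∀ n, (A n).Nonempty := by
    intro n
    obtain ⟨x, hx⟩ := key (F n)
    exact ⟨x, fun g hg => hx g hg⟩
  have hAmono : ∀ n, A (n + 1) ⊆ A n := fun n x hx g hg => hx g (hFmono (Nat.le_succ n) hg)
  set K : ℕ → Submodule R (G → M) := fun n => ⨅ g ∈ F n, LinearMap.ker (T g) with hKdef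
  have hKmem : ∀ n x, x ∈ K n ↔ ∀ g ∈ F n, T g x = 0 := by
    intro n x
    simp [hKdef, Submodule.mem_iInf, LinearMap.mem_ker]
  let ρ : (m : ℕ) → (G → M) →ₗ[R] ({w // w ∈ W m} → M) := fun m =>
    LinearMap.funLeft R M (fun w : {w // w ∈ W m} => (w : G))
  have hρ : ∀ m x w, ρ m x w = x w.1 := fun _ _ _ => rfl
  let P : (m : ℕ) → ℕ → Set ({w // w ∈ W m} → M) := fun m n => (ρ m) '' (A n)
  -- each projection is a coset of a submodule
  have hPcoset : ∀ m n, ∃ (v : {w // w ∈ W m} → M) (N : Submodule R ({w // w ∈ W m} → M)),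
      P m n = v +ᵥ (N : Set _) := by
    intro m n
    obtain ⟨x₀, hx₀⟩ := hAne n
    refine ⟨ρ m x₀, (K n).map (ρ m), ?_⟩
    ext b
    constructor
    · rintro ⟨x, hx, rfl⟩
      refine mem_coset_of_sub ⟨x - x₀, (hKmem n _).mpr fun g hg => ?_, by simp⟩
      rw [map_sub, hx g hg, hx₀ g hg, sub_self]
    · intro hb
      obtain ⟨z, hz, hzb⟩ := Set.mem_vadd_set.mp hb
      obtain ⟨w, hw, rfl⟩ := hz
      refine ⟨x₀ + w, ?_, by rw [← hzb]; simp [vadd_eq_add]⟩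
      intro g hg
      rw [map_add, hx₀ g hg, (hKmem n w).mp hw g hg, add_zero]
  have hPmono : ∀ m n, P m (n + 1) ⊆ P m n := by
    rintro m n b ⟨x, hx, rfl⟩
    exact ⟨x, hAmono n hx, rfl⟩
  -- stabilization of the projected cosets
  have hstab : ∀ m, ∃ n₀, ∀ n, n₀ ≤ n → P m n = P m n₀ := fun m =>
    coset_dcc (P m) (hPcoset m) (hPmono m)
  choose φ hφ using hstab
  have hPstab : ∀ m {n n'}, φ m ≤ n → φ m ≤ n' → P m n = P m n' := by
    intro m n n' hn hn'
    rw [hφ m n hn, hφ m n' hn']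
  -- the limit sets and the surjectivity of the restrictions between them
  let B : (m : ℕ) → Set ({w // w ∈ W m} → M) := fun m => P m (φ m)
  have hBP : ∀ m n, φ m ≤ n → P m n = B m := fun m n hn => hφ m n hn
  have hB0 : (B 0).Nonempty := by
    obtain ⟨x, hx⟩ := hAne (φ 0)
    exact ⟨ρ 0 x, x, hx, rfl⟩
  have hres : ∀ m (b : {w // w ∈ W m} → M), b ∈ B m →
      ∃ b' : {w // w ∈ W (m + 1)} → M, b' ∈ B (m + 1) ∧
        ∀ w : {w // w ∈ W m}, b' ⟨w.1, hWmono (Nat.le_succ m) w.2⟩ = b w := by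
    intro m b hb
    have hb' : b ∈ P m (max (φ m) (φ (m + 1))) := by
      rw [hBP m _ (le_max_left _ _)]; exact hb
    obtain ⟨x, hx, rfl⟩ := hb'
    refine ⟨ρ (m + 1) x, ?_, fun w => rfl⟩
    rw [← hBP (m + 1) _ (le_max_right (φ m) (φ (m + 1)))]
    exact ⟨x, hx, rfl⟩
  choose step hstep hstepres using hres
  -- build the coherent sequence
  let seq : (m : ℕ) → {b : {w // w ∈ W m} → M // b ∈ B m} := fun m =>
    Nat.rec ⟨hB0.choose, hB0.choose_spec⟩
      (fun m p => ⟨step m p.1 p.2, hstep m p.1 p.2⟩) m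
  have hseqsucc : ∀ m (w : {w // w ∈ W m}),
      (seq (m + 1)).1 ⟨w.1, hWmono (Nat.le_succ m) w.2⟩ = (seq m).1 w := fun m w =>
    hstepres m (seq m).1 (seq m).2 w
  have hcoh : ∀ m m', m ≤ m' → ∀ g (hg : g ∈ W m) (hg' : g ∈ W m'),
      (seq m').1 ⟨g, hg'⟩ = (seq m).1 ⟨g, hg⟩ := by
    intro m m' hmm'
    induction m', hmm' using Nat.le_induction with
    | base => intro g hg hg'; rfl
    | succ k hk ih =>
      intro g hg hg'
      have hgk : g ∈ W k := hWmono hk hg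
      have := hseqsucc k ⟨g, hgk⟩
      rw [← ih g hg hgk]
      exact this
  -- glue
  refine ⟨fun g => if h : ∃ m, g ∈ W m then (seq (Nat.find h)).1 ⟨g, Nat.find_spec h⟩ else 0, ?_⟩
  intro h hh
  obtain ⟨k, hk⟩ := he ⟨h, hh⟩
  set g : G := g₀ * h with hgdef
  have hgF : g ∈ F k := by
    refine Finset.mem_image.mpr ⟨k, Finset.mem_range.mpr (Nat.lt_succ_self k), ?_⟩
    rw [hk]
  have hseqk : (seq k).1 ∈ P k (max (φ k) k) := by
    rw [hBP k _ (le_max_left _ _)]; exact (seq k).2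
  obtain ⟨x', hx', hρx'⟩ := hseqk
  have hxval : ∀ s : {s // s ∈ S},
      (if h : ∃ m, g * s.1 ∈ W m then (seq (Nat.find h)).1 ⟨g * s.1, Nat.find_spec h⟩ else 0)
        = x' (g * s.1) := by
    intro s
    have hgs : g * s.1 ∈ W k := Finset.mul_mem_mul hgF s.2
    have hex : ∃ m, g * s.1 ∈ W m := ⟨k, hgs⟩
    rw [dif_pos hex]
    have hfind : Nat.find hex ≤ k := Nat.find_min' hex hgs
    rw [← hcoh (Nat.find hex) k hfind _ (Nat.find_spec hex) hgs, ← hρx']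
    rfl
  have : μ (fun s => (if h : ∃ m, g * s.1 ∈ W m then
      (seq (Nat.find h)).1 ⟨g * s.1, Nat.find_spec h⟩ else 0)) = μ (fun s => x' (g * s.1)) := by
    congr 1
    funext s
    exact hxval s
  rw [this]
  have hgFn : g ∈ F (max (φ k) k) := hFmono (le_max_right _ _) hgF
  exact hx' g hgFn

end Aux

/-- Let `M` be a left `R`-module in which every non-increasing sequence of translates of
submodules stabilizes (e.g. `M` Artinian). Then the image of every `R`-linear cellular
automaton `τ : M^G → M^G` is closed in `M^G` for the prodiscrete topology. -/
theorem linear_cellular_automaton_closed_image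
    {G R M : Type*} [Group G] [Ring R] [AddCommGroup M] [Module R M]
    (hdcc : ∀ c : ℕ → Set M,
      (∀ n, ∃ (v : M) (N : Submodule R M), c n = v +ᵥ (N : Set M)) →
      (∀ n, c (n + 1) ⊆ c n) → ∃ n₀, ∀ n, n₀ ≤ n → c n = c n₀)
    (τ : (G → M) → G → M)
    (hτ : ∃ (S : Finset G) (μ : ({s // s ∈ S} → M) →ₗ[R] M),
      ∀ (x : G → M) (g : G), τ x g = μ fun s => x (g * s.1)) :
    @IsClosed (G → M) (@Pi.topologicalSpace G (fun _ => M) (fun _ => ⊥))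
      (Set.range τ) := by
  classical
  obtain ⟨S, μ, hμ⟩ := hτ
  haveI : IsArtinian R M := artinian_of_hdcc hdcc
  letI : TopologicalSpace M := ⊥
  haveI : DiscreteTopology M := ⟨rfl⟩
  show IsClosed (Set.range τ)
  refine isClosed_of_closure_subset ?_
  intro y hy
  -- finite approximability of `y`
  have key : ∀ F : Finset G, ∃ x : G → M, ∀ g ∈ F, μ (fun s => x (g * s.1)) = y g := by
    intro F
    have hUeq : {z : G → M | ∀ g ∈ F, z g = y g} =
        ⋂ g ∈ F, (fun z : G → M => z g) ⁻¹' {y g} := by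
      ext z; simp
    have hU : IsOpen {z : G → M | ∀ g ∈ F, z g = y g} := by
      rw [hUeq]
      exact isOpen_biInter_finset fun g _ =>
        (continuous_apply g).isOpen_preimage _ (isOpen_discrete _)
    obtain ⟨z, hzU, hzr⟩ := mem_closure_iff.mp hy _ hU (fun g _ => rfl)
    obtain ⟨x, rfl⟩ := hzr
    exact ⟨x, fun g hg => by rw [← hμ x g]; exact hzU g hg⟩
  set H : Subgroup G := Subgroup.closure (S : Set G) with hHdef
  -- solve the problem on each left coset of `H`
  have main : ∀ g₀ : G, ∃ x : G → M, ∀ h : G, h ∈ H →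
      μ (fun s => x (g₀ * h * s.1)) = y (g₀ * h) := fun g₀ =>
    coset_solution S μ y key g₀
  choose xc hxc using main
  -- glue the per-coset solutions
  let rep : G → G := fun g => (QuotientGroup.mk (s := H) g).out
  have hrep : ∀ g : G, (rep g)⁻¹ * g ∈ H := fun g =>
    QuotientGroup.eq.mp (QuotientGroup.out_eq' (QuotientGroup.mk (s := H) g))
  have hrepS : ∀ (g : G) (s : {s // s ∈ S}), rep (g * s.1) = rep g := by
    intro g s
    have : QuotientGroup.mk (s := H) (g * s.1) = QuotientGroup.mk (s := H) g := by
      rw [eq_comm, QuotientGroup.eq]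
      simpa using Subgroup.subset_closure s.2
    simp only [rep, this]
  refine ⟨fun g => xc (rep g) g, ?_⟩
  funext g
  rw [hμ]
  have h1 : (fun s : {s // s ∈ S} => xc (rep (g * s.1)) (g * s.1))
      = fun s : {s // s ∈ S} => xc (rep g) (g * s.1) := by
    funext s
    rw [hrepS g s]
  calc μ (fun s => xc (rep (g * s.1)) (g * s.1))
      = μ (fun s => xc (rep g) (g * s.1)) := by rw [h1]
    _ = y g := by
        have := hxc (rep g) ((rep g)⁻¹ * g) (hrep g)
        rwa [mul_inv_cancel_left] at this
end

section
/- In the symmetric group G = S₃, the coset {(1 2), (1 2 3)} = (1 2)·⟨(1 3)⟩ is not the image f(g'N') of any coset of a normal subgroup N' of any group G' under any group homomorphism f : G' → S₃. That is, this coset is not a subalgebraic subset of S₃ in the category of groups. -/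
open scoped Pointwise

/-- In `S₃ = Perm (Fin 3)`, the coset `(1 2)·⟨(1 3)⟩ = {(1 2), (1 2)(1 3)}` is not
subalgebraic in the category of groups: it is not the image of a coset of a normal
subgroup under any group homomorphism into `S₃`. -/
theorem coset_in_S3_not_subalgebraic :
    ¬ ∃ (G' : Type u) (_ : Group G') (N' : Subgroup G') (_ : N'.Normal)
        (g' : G') (f : G' →* Equiv.Perm (Fin 3)),
      ({Equiv.swap 0 1, Equiv.swap 0 1 * Equiv.swap 0 2} : Set (Equiv.Perm (Fin 3))) =
        f '' (g' • (N' : Set G')) := by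
  rintro ⟨G', _, N', hN, g', f, hset⟩
  have hax : Equiv.swap 0 1 ∈ f '' (g' • (N' : Set G')) := by
    rw [← hset]; left; rfl
  have hbx : Equiv.swap 0 1 * Equiv.swap 0 2 ∈ f '' (g' • (N' : Set G')) := by
    rw [← hset]; right; rfl
  obtain ⟨x, hx, hfx⟩ := hax
  obtain ⟨y, hy, hfy⟩ := hbx
  obtain ⟨n₁, hn₁, hxe⟩ := hx
  obtain ⟨n₂, hn₂, hye⟩ := hy
  simp only [smul_eq_mul] at hxe hye
  -- n := x⁻¹ * y ∈ N'
  have hn : x⁻¹ * y ∈ N' := by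
    rw [← hxe, ← hye]
    have : (g' * n₁)⁻¹ * (g' * n₂) = n₁⁻¹ * n₂ := by group
    rw [this]
    exact N'.mul_mem (N'.inv_mem hn₁) hn₂
  have hconj : x * (x⁻¹ * y) * x⁻¹ ∈ N' := hN.conj_mem _ hn x
  have hk : n₁ * (x * (x⁻¹ * y) * x⁻¹) ∈ N' := N'.mul_mem hn₁ hconj
  have hw : x * y * x⁻¹ ∈ g' • (N' : Set G') := by
    refine ⟨n₁ * (x * (x⁻¹ * y) * x⁻¹), hk, ?_⟩
    simp only [smul_eq_mul]; rw [← hxe]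
    group
  have hwmem : f (x * y * x⁻¹) ∈
      ({Equiv.swap 0 1, Equiv.swap 0 1 * Equiv.swap 0 2} : Set (Equiv.Perm (Fin 3))) := by
    rw [hset]; exact ⟨_, hw, rfl⟩
  rw [map_mul, map_mul, map_inv, hfx, hfy] at hwmem
  revert hwmem
  decide
end

section
/- Let R be a nonzero ring and M = ⊕_{i∈ℕ} R the countable direct sum. For each n, let X_n = {m ∈ M : m_0 = m_1 = ⋯ = m_n = 1}. Then each X_n is a nonempty translate of a submodule of M (hence an algebraic subset in R-Mod), the sequence (X_n) is decreasing, and ⋂_{n∈ℕ} X_n = ∅. -/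
open scoped Pointwise

/-- The indicator vector: 1 on `{0,...,n}`, 0 elsewhere. -/
noncomputable def dsVec {R : Type*} [Ring R] (n : ℕ) : ℕ →₀ R :=
  Finsupp.indicator (Finset.range (n + 1)) (fun _ _ => 1)

lemma dsVec_apply {R : Type*} [Ring R] (n i : ℕ) (h : i ≤ n) :
    (dsVec (R := R) n) i = 1 := by
  simp [dsVec, Finsupp.indicator_apply, Finset.mem_range, Nat.lt_succ_iff, h]

/-- The submodule of sequences vanishing on `{0,...,n}`. -/
def dsSub {R : Type*} [Ring R] (n : ℕ) : Submodule R (ℕ →₀ R) where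
  carrier := {m | ∀ i ≤ n, m i = 0}
  add_mem' := by intro a b ha hb i hi; simp [ha i hi, hb i hi]
  zero_mem' := by intro i hi; simp
  smul_mem' := by intro c a ha i hi; simp [ha i hi]

/-- For a nonzero ring `R` and `M = ⊕_{i∈ℕ} R` (finitely supported sequences), the sets
`X n = {m : m_0 = ⋯ = m_n = 1}` are nonempty translates of submodules of `M`, form a
decreasing sequence, and have empty intersection. -/
theorem direct_sum_algebraic_decreasing_empty_intersection
    {R : Type*} [Ring R] [Nontrivial R] :
    let X : ℕ → Set (ℕ →₀ R) := fun n => {m | ∀ i ≤ n, m i = 1}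
    (∀ n, (X n).Nonempty) ∧
    (∀ n, ∃ (v : ℕ →₀ R) (N : Submodule R (ℕ →₀ R)), X n = v +ᵥ (N : Set (ℕ →₀ R))) ∧
    (∀ n, X (n + 1) ⊆ X n) ∧
    (⋂ n, X n) = ∅ := by
  intro X
  refine ⟨?_, ?_, ?_, ?_⟩
  · intro n
    exact ⟨dsVec n, fun i hi => dsVec_apply n i hi⟩
  · intro n
    refine ⟨dsVec n, dsSub n, ?_⟩
    ext m
    constructor
    · intro hm
      refine ⟨m - dsVec n, ?_, by simp⟩
      intro i hi
      simp [Finsupp.sub_apply, hm i hi, dsVec_apply n i hi]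
    · rintro ⟨s, hs, rfl⟩
      intro i hi
      simp [Finsupp.add_apply, dsVec_apply n i hi, hs i hi]
  · intro n m hm i hi
    exact hm i (hi.trans (Nat.le_succ n))
  · ext m
    simp only [Set.mem_iInter, Set.mem_empty_iff_false, iff_false]
    intro hm
    set k := m.support.sup id + 1 with hk
    have hk0 : m k = 0 := by
      by_contra h
      have : k ∈ m.support := Finsupp.mem_support_iff.mpr h
      have := Finset.le_sup (f := id) this
      simp only [id_eq] at this
      omega
    have hk1 : m k = 1 := hm k k le_rfl
    exact one_ne_zero (hk1 ▸ hk0)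
end

section
/- If G is residually finite, then for every set A, the set {x ∈ A^G : the orbit G·x is finite} is dense in A^G with the prodiscrete topology. -/
open scoped Classical

/-- If `G` is residually finite (the intersection of its finite-index subgroups is
trivial), then for every set `A` the configurations in `A^G` with finite orbit under
the shift action `(g·x)(k) = x(g⁻¹k)` are dense in `A^G` for the prodiscrete topology. -/
theorem residually_finite_finite_orbit_configurations_dense
    {G : Type*} [Group G]
    (hrf : ∀ g : G, (∀ H : Subgroup G, H.FiniteIndex → g ∈ H) → g = 1)
    (A : Type v) :
    @Dense (G → A) (@Pi.topologicalSpace G (fun _ => A) (fun _ => ⊥))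
      {x : G → A | (Set.range fun g : G => (fun k => x (g⁻¹ * k))).Finite} := by
  letI : TopologicalSpace A := ⊥
  haveI : DiscreteTopology A := ⟨rfl⟩
  -- residual finiteness: separate nontrivial elements from finite-index subgroups
  have key : ∀ g : G, g ≠ 1 → ∃ H : Subgroup G, H.FiniteIndex ∧ g ∉ H := by
    intro g hg
    by_contra h
    push_neg at h
    exact hg (hrf g fun H hH => h H hH)
  rw [dense_iff_inter_open]
  rintro U hU ⟨x, hx⟩
  rw [isOpen_pi_iff] at hU
  obtain ⟨I, u, hu, hsub⟩ := hU x hx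
  -- choose a finite-index subgroup separating each nontrivial element
  have hA : ∀ a ∈ I, x a = x a := fun _ _ => rfl
  -- the normal subgroup
  set N : Subgroup G :=
    ⨅ p : (↥I × ↥I),
      if h : ((p.1 : G)⁻¹ * (p.2 : G)) ≠ 1 then ((key _ h).choose).normalCore else ⊤
    with hN
  haveI : Finite ((↥I × ↥I)) := by
    haveI : Finite (I : Set G) := I.finite_toSet
    infer_instance
  haveI hNfin : N.FiniteIndex := by
    apply Subgroup.finiteIndex_iInf
    intro p
    by_cases h : ((p.1 : G)⁻¹ * (p.2 : G)) ≠ 1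
    · rw [dif_pos h]
      haveI := ((key _ h).choose_spec).1
      infer_instance
    · rw [dif_neg h]
      infer_instance
  haveI hNnormal : N.Normal := by
    constructor
    intro n hn g
    rw [hN, Subgroup.mem_iInf] at hn ⊢
    intro p
    by_cases h : ((p.1 : G)⁻¹ * (p.2 : G)) ≠ 1
    · have hn' := hn p
      rw [dif_pos h] at hn'
      rw [dif_pos h]
      exact Subgroup.normalCore_normal _ |>.conj_mem n hn' g
    · rw [dif_neg h]
      exact Subgroup.mem_top _
  -- the quotient map is injective on I
  have hinj : ∀ a ∈ I, ∀ b ∈ I,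
      (QuotientGroup.mk a : G ⧸ N) = QuotientGroup.mk b → a = b := by
    intro a ha b hb hab
    by_contra hne
    have h1 : a⁻¹ * b ≠ 1 := fun h => hne (by rwa [inv_mul_eq_one] at h)
    have hmem : a⁻¹ * b ∈ N := (QuotientGroup.eq).1 hab
    rw [hN, Subgroup.mem_iInf] at hmem
    have := hmem ⟨⟨a, ha⟩, ⟨b, hb⟩⟩
    rw [dif_pos h1] at this
    exact ((key _ h1).choose_spec).2 (Subgroup.normalCore_le _ this)
  -- build the periodic configuration
  have hxdef : ∃ a : A, True := ⟨x 1, trivial⟩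
  set φ : G ⧸ N → A := fun q =>
    if h : ∃ a, a ∈ I ∧ (QuotientGroup.mk a : G ⧸ N) = q then x h.choose else x 1
    with hφ
  set y : G → A := fun k => φ (QuotientGroup.mk k) with hy
  refine ⟨y, ?_, ?_⟩
  · -- y belongs to U
    apply hsub
    intro a ha
    have h : ∃ b, b ∈ I ∧ (QuotientGroup.mk b : G ⧸ N) = (QuotientGroup.mk a : G ⧸ N) :=
      ⟨a, ha, rfl⟩
    have : y a = x h.choose := by
      simp only [hy, hφ, dif_pos h]
    rw [this, hinj h.choose h.choose_spec.1 a ha h.choose_spec.2]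
    exact (hu a ha).2
  · -- y has finite orbit
    show (Set.range fun g : G => (fun k => y (g⁻¹ * k))).Finite
    haveI : Finite (G ⧸ N) := N.finite_quotient_of_finiteIndex
    have hfact : (Set.range fun g : G => (fun k => y (g⁻¹ * k))) ⊆
        Set.range (fun q : G ⧸ N => (fun k => φ (q⁻¹ * QuotientGroup.mk k))) := by
      rintro z ⟨g, rfl⟩
      refine ⟨QuotientGroup.mk g, ?_⟩
      funext k
      show φ (QuotientGroup.mk (g⁻¹ * k)) = φ ((QuotientGroup.mk g)⁻¹ * QuotientGroup.mk k)
      rw [← QuotientGroup.mk_inv, ← QuotientGroup.mk_mul]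
    exact (Set.finite_range _).subset hfact
end
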